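/- Let γ1 ≥ γ2 > 0, let λ = (λ1, λ2, λ3) with λ1 ≥ λ2 ≥ λ3 ≥ 0, and let τ ≥ 0 satisfy (γ1+2γ2) λ2 e^{−(γ1+γ2)τ} ≥ γ2 λ2 + (γ1+γ2) λ3. Set μ = (1, (γ1/(γ1+γ2))(1 − e^{−(γ1+γ2)τ}), 0). Then for every 3×3 doubly stochastic real matrix Θ, F(Θ) ≤ F(I), where I is the 3×3 identity matrix. (Hamilton–Jacobi–Bellman verification of the ordered diagonal cooling strategy for the 3-level Λ system in the regime τ ≤ τ*.) -/

import Mathlib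

open Matrix Finset

/-- `Θ` is doubly stochastic: nonnegative entries, rows and columns summing to 1. -/
def DoublyStochastic3 (Θ : Matrix (Fin 3) (Fin 3) ℝ) : Prop :=
  (∀ i j, 0 ≤ Θ i j) ∧ (∀ i, ∑ j : Fin 3, Θ i j = 1) ∧ (∀ j, ∑ i : Fin 3, Θ i j = 1)

/-- The matrix `B` of the 3-level Λ system: `B_12 = γ1`, `B_32 = γ2`, all other
entries zero. -/
def Bmat3 (γ1 γ2 : ℝ) : Matrix (Fin 3) (Fin 3) ℝ :=
  Matrix.of ![![0, γ1, 0], ![0, 0, 0], ![0, γ2, 0]]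

/-- The vector `d = (0, −(γ1+γ2), 0)` of the 3-level Λ system. -/
def dvec3 (γ1 γ2 : ℝ) : Fin 3 → ℝ := ![0, -(γ1 + γ2), 0]

/-- The cooling objective `F(Θ) = μᵀ (Θᵀ B Θ + Diag(Θᵀ d)) λ`. -/
def Fobj (γ1 γ2 : ℝ) (μ lam : Fin 3 → ℝ) (Θ : Matrix (Fin 3) (Fin 3) ℝ) : ℝ :=
  μ ⬝ᵥ ((Θᵀ * Bmat3 γ1 γ2 * Θ + Matrix.diagonal (Θᵀ.mulVec (dvec3 γ1 γ2))).mulVec lam)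

/-!
Write `μ = (1, m, 0)` and `(x, y, z)` for the second row of `Θ`. Expanding, `F(Θ)` is a
"gain" factor `γ1 (Θ₁₁ + m Θ₁₂) + γ2 (Θ₃₁ + m Θ₃₂)` times `l1 x + l2 y + l3 z`, minus the decay
term `(γ1 + γ2)(l1 x + m l2 y)`. Double stochasticity and `γ1 ≥ γ2` bound the gain factor by an
expression in the second row alone, which leaves a quadratic in `(x, y, z)` on the simplex. Its
only positive coefficient is the one of `x z`, and it is dominated by the (negative) linear
coefficient of `x`; the linear coefficient of `z` is nonpositive precisely by the critical-time
condition `(γ1 + 2γ2) m l2 ≤ γ1 (l2 - l3)`.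
-/

lemma Fobj_eq (γ1 γ2 m l1 l2 l3 : ℝ) (Θ : Matrix (Fin 3) (Fin 3) ℝ) :
    Fobj γ1 γ2 ![1, m, 0] ![l1, l2, l3] Θ =
      (γ1 * (Θ 0 0 + m * Θ 0 1) + γ2 * (Θ 2 0 + m * Θ 2 1)) * (l1 * Θ 1 0 + l2 * Θ 1 1 + l3 * Θ 1 2)
        - (γ1 + γ2) * (l1 * Θ 1 0 + m * l2 * Θ 1 1) := by
  simp [Fobj, Bmat3, dvec3, mulVec, mul_apply, dotProduct, Fin.sum_univ_three, diagonal]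
  ring

lemma Fobj_one (γ1 γ2 m l1 l2 l3 : ℝ) :
    Fobj γ1 γ2 ![1, m, 0] ![l1, l2, l3] 1 = (γ1 - (γ1 + γ2) * m) * l2 := by
  simp [Fobj, Bmat3, dvec3, mulVec, dotProduct, Fin.sum_univ_three, diagonal]
  ring

lemma DoublyStochastic3.gain_le {Θ : Matrix (Fin 3) (Fin 3) ℝ} (hΘ : DoublyStochastic3 Θ)
    {γ1 γ2 m : ℝ} (hγ : γ2 ≤ γ1) (hm0 : 0 ≤ m) (hm1 : m ≤ 1) :
    γ1 * (Θ 0 0 + m * Θ 0 1) + γ2 * (Θ 2 0 + m * Θ 2 1)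
      ≤ γ1 * (Θ 1 1 + Θ 1 2) + m * (γ1 * Θ 1 0 + γ2 * Θ 1 2) := by
  obtain ⟨hpos, hrow, hcol⟩ := hΘ
  simp only [Fin.sum_univ_three] at hrow hcol
  have hgap : γ1 * (Θ 1 1 + Θ 1 2) + m * (γ1 * Θ 1 0 + γ2 * Θ 1 2)
      - (γ1 * (Θ 0 0 + m * Θ 0 1) + γ2 * (Θ 2 0 + m * Θ 2 1))
      = (γ1 - γ2) * ((1 - m) * Θ 2 0 + m * Θ 0 2) := by
    linear_combination (-(γ1 - γ2) * m) * hrow 0 + (γ1 + m * γ2) * hrow 1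
      + (-γ1 + (γ1 - γ2) * m) * hcol 0 + (-m * γ2) * hcol 1
  have : 0 ≤ (γ1 - γ2) * ((1 - m) * Θ 2 0 + m * Θ 0 2) :=
    mul_nonneg (sub_nonneg.2 hγ)
      (add_nonneg (mul_nonneg (sub_nonneg.2 hm1) (hpos 2 0)) (mul_nonneg hm0 (hpos 0 2)))
  linarith

lemma quadratic_le_on_simplex {γ1 γ2 m l1 l2 l3 x y z : ℝ} (hγ1 : 0 ≤ γ1) (hγ2 : 0 ≤ γ2)
    (hl12 : l2 ≤ l1) (hl23 : l3 ≤ l2) (hl3 : 0 ≤ l3) (hm0 : 0 ≤ m) (hm1 : m ≤ 1)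
    (hcrit : (γ1 + 2 * γ2) * m * l2 ≤ γ1 * (l2 - l3))
    (hx : 0 ≤ x) (hy : 0 ≤ y) (hz : 0 ≤ z) (hsum : x + y + z = 1) :
    (γ1 * (y + z) + m * (γ1 * x + γ2 * z)) * (l1 * x + l2 * y + l3 * z)
      - (γ1 + γ2) * (l1 * x + m * l2 * y) ≤ (γ1 - (γ1 + γ2) * m) * l2 := by
  obtain rfl : y = 1 - x - z := by linarith
  set cx := γ2 * (l1 - l2) + (2 * γ1 + γ2) * (1 - m) * l2
  set cxz := γ1 * (1 - m) * (l2 - l3) + m * γ2 * (l1 - l2)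
  have hexpand : (γ1 * (1 - x - z + z) + m * (γ1 * x + γ2 * z))
        * (l1 * x + l2 * (1 - x - z) + l3 * z)
      - (γ1 + γ2) * (l1 * x + m * l2 * (1 - x - z)) - (γ1 - (γ1 + γ2) * m) * l2
      = -(x * (cx - cxz * z)) - z * (γ1 * (l2 - l3) - (γ1 + 2 * γ2) * m * l2)
        - γ1 * (1 - m) * (l1 - l2) * x ^ 2 - m * γ2 * (l2 - l3) * z ^ 2 := by
    ring
  have h1m : 0 ≤ 1 - m := sub_nonneg.2 hm1
  have hl2 : 0 ≤ l2 := hl3.trans hl23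
  have hcxz : 0 ≤ cxz := by
    have := sub_nonneg.2 hl12; have := sub_nonneg.2 hl23; positivity
  have hcxz_le : cxz ≤ cx := by
    have hgap : cx - cxz = (1 - m) * (γ2 * (l1 - l2) + (γ1 + γ2) * l2 + γ1 * l3) := by ring
    have := sub_nonneg.2 hl12
    have : 0 ≤ (1 - m) * (γ2 * (l1 - l2) + (γ1 + γ2) * l2 + γ1 * l3) := by positivity
    linarith
  have hx_term : 0 ≤ x * (cx - cxz * z) := by
    refine mul_nonneg hx (sub_nonneg.2 ?_)
    calc cxz * z ≤ cxz * 1 := mul_le_mul_of_nonneg_left (by linarith) hcxz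
      _ ≤ cx := by rw [mul_one]; exact hcxz_le
  have hz_term : 0 ≤ z * (γ1 * (l2 - l3) - (γ1 + 2 * γ2) * m * l2) :=
    mul_nonneg hz (sub_nonneg.2 hcrit)
  have hx2 : 0 ≤ γ1 * (1 - m) * (l1 - l2) * x ^ 2 := by
    have := sub_nonneg.2 hl12; positivity
  have hz2 : 0 ≤ m * γ2 * (l2 - l3) * z ^ 2 := by
    have := sub_nonneg.2 hl23; positivity
  linarith

lemma Fobj_le_Fobj_one {γ1 γ2 m l1 l2 l3 : ℝ} (hγ2 : 0 ≤ γ2) (hγ : γ2 ≤ γ1)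
    (hl12 : l2 ≤ l1) (hl23 : l3 ≤ l2) (hl3 : 0 ≤ l3) (hm0 : 0 ≤ m) (hm1 : m ≤ 1)
    (hcrit : (γ1 + 2 * γ2) * m * l2 ≤ γ1 * (l2 - l3))
    {Θ : Matrix (Fin 3) (Fin 3) ℝ} (hΘ : DoublyStochastic3 Θ) :
    Fobj γ1 γ2 ![1, m, 0] ![l1, l2, l3] Θ ≤ Fobj γ1 γ2 ![1, m, 0] ![l1, l2, l3] 1 := by
  have hpos := hΘ.1
  have hrow : Θ 1 0 + Θ 1 1 + Θ 1 2 = 1 := by simpa [Fin.sum_univ_three] using hΘ.2.1 1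
  have hl2 : 0 ≤ l2 := hl3.trans hl23
  have hl1 : 0 ≤ l1 := hl2.trans hl12
  have hload : 0 ≤ l1 * Θ 1 0 + l2 * Θ 1 1 + l3 * Θ 1 2 := by
    have := hpos 1 0; have := hpos 1 1; have := hpos 1 2; positivity
  rw [Fobj_eq, Fobj_one]
  calc _ ≤ (γ1 * (Θ 1 1 + Θ 1 2) + m * (γ1 * Θ 1 0 + γ2 * Θ 1 2))
          * (l1 * Θ 1 0 + l2 * Θ 1 1 + l3 * Θ 1 2) - (γ1 + γ2) * (l1 * Θ 1 0 + m * l2 * Θ 1 1) := by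
        gcongr ?_ * _ - _
        exact hΘ.gain_le hγ hm0 hm1
    _ ≤ _ := quadratic_le_on_simplex (hγ2.trans hγ) hγ2 hl12 hl23 hl3 hm0 hm1 hcrit
        (hpos 1 0) (hpos 1 1) (hpos 1 2) hrow

/-- HJB verification of the ordered diagonal strategy in the first regime (`τ ≤ τ*`):
the identity maximizes `F` over doubly stochastic matrices, with
`μ = (1, (γ1/(γ1+γ2))(1 − e^{−(γ1+γ2)τ}), 0)`. -/
theorem hjb_first_regime (γ1 γ2 l1 l2 l3 τ : ℝ)
    (hγ : γ1 ≥ γ2) (hγ2 : 0 < γ2)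
    (hl12 : l1 ≥ l2) (hl23 : l2 ≥ l3) (hl3 : 0 ≤ l3) (hτ : 0 ≤ τ)
    (hcrit : (γ1 + 2 * γ2) * l2 * Real.exp (-(γ1 + γ2) * τ)
      ≥ γ2 * l2 + (γ1 + γ2) * l3) :
    ∀ Θ : Matrix (Fin 3) (Fin 3) ℝ, DoublyStochastic3 Θ →
      Fobj γ1 γ2 ![1, γ1 / (γ1 + γ2) * (1 - Real.exp (-(γ1 + γ2) * τ)), 0] ![l1, l2, l3] Θ
        ≤ Fobj γ1 γ2 ![1, γ1 / (γ1 + γ2) * (1 - Real.exp (-(γ1 + γ2) * τ)), 0] ![l1, l2, l3]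
            (1 : Matrix (Fin 3) (Fin 3) ℝ) := by
  intro Θ hΘ
  set E := Real.exp (-(γ1 + γ2) * τ)
  set m := γ1 / (γ1 + γ2) * (1 - E)
  have hγ1 : 0 ≤ γ1 := hγ2.le.trans hγ
  have hsum : 0 < γ1 + γ2 := by linarith
  have hE0 : 0 ≤ E := (Real.exp_pos _).le
  have hE1 : E ≤ 1 := Real.exp_le_one_iff.2 (by nlinarith)
  have hm : (γ1 + γ2) * m = γ1 * (1 - E) := by rw [← mul_assoc, mul_div_cancel₀ _ hsum.ne']
  have hm0 : 0 ≤ m := mul_nonneg (div_nonneg hγ1 hsum.le) (sub_nonneg.2 hE1)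
  have hm1 : m ≤ 1 := le_of_mul_le_mul_left (by nlinarith) hsum
  have hcrit' : (γ1 + 2 * γ2) * m * l2 ≤ γ1 * (l2 - l3) := by
    refine le_of_mul_le_mul_left ?_ hsum
    calc (γ1 + γ2) * ((γ1 + 2 * γ2) * m * l2) = γ1 * ((γ1 + 2 * γ2) * (1 - E) * l2) := by
          linear_combination (γ1 + 2 * γ2) * l2 * hm
      _ ≤ γ1 * ((γ1 + γ2) * (l2 - l3)) := mul_le_mul_of_nonneg_left (by linarith) hγ1
      _ = (γ1 + γ2) * (γ1 * (l2 - l3)) := by ring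
  exact Fobj_le_Fobj_one hγ2.le hγ hl12 hl23 hl3 hm0 hm1 hcrit' hΘ
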